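/- Let G be a connected graph on n vertices. Then PI_w(G) ≤ (8/27)n⁴, with equality if and only if 3 divides n and G is the complete balanced tripartite graph K_{n/3,n/3,n/3}. -/

import Mathlib

open Finset
open scoped Classical

/-- Number of vertices strictly closer to `u` than to `v`. -/
noncomputable def ncl {V : Type*} [Fintype V] (G : SimpleGraph V) (u v : V) : ℕ :=
  (Finset.univ.filter fun x => G.dist x u < G.dist x v).card

/-- Weighted vertex PI index: each edge `uv` contributes
`(deg u + deg v) * (n_u(e) + n_v(e))`; each edge is counted twice in the double sum. -/
noncomputable def PIw {V : Type*} [Fintype V] (G : SimpleGraph V) : ℝ :=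
  (∑ u, ∑ v, if G.Adj u v then
    (((G.degree u + G.degree v : ℕ) : ℝ) * ((ncl G u v + ncl G v u : ℕ) : ℝ)) else 0) / 2

/-!
Let `uv` be an edge with `c` common neighbours. Then `deg u + deg v ≤ n + c`, and a common
neighbour is at distance one from both ends, so `n_u + n_v ≤ n - c`: the edge contributes at most
`n² - c²`. Summing over the `M = 2m` darts, `∑ c ≥ ∑ (deg u + deg v - n) = 2 ∑ deg² - M n` and
`n ∑ deg² ≥ M²` give the Nordhaus–Stewart bound `n ∑ c ≥ M (2M - n²)`, and Cauchy–Schwarz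
`M ∑ c² ≥ (∑ c)²` then yields `2 n² PI_w ≤ 4 M² (n² - M) ≤ 16 n⁶ / 27` when `n² ≤ 2M`, the
last step being tight only at `3M = 2n²`; when `2M < n²` already `2 PI_w ≤ M n² < n⁴ / 2`. In the case of equality the graph is regular and `N(u) ∪ N(v) = V`
for every edge `uv`, so non-adjacency is an equivalence relation whose three classes have
`n / 3` vertices each.
-/

/-- Read with `n = |V|`, `M` the number of darts, `P = PI_w`, `D = ∑ deg²`, `S = ∑ c` and
`Q = ∑ c²` (sums of codegrees over darts). -/
theorem bound_of_degree_codegree_inequalities_of_sq_le {n M P D S Q : ℝ} (hn : 0 < n)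
    (hS : 0 ≤ S) (hP : 2 * P + Q ≤ M * n ^ 2) (hD : 2 * D ≤ S + M * n)
    (hMD : M ^ 2 ≤ n * D) (hSQ : S ^ 2 ≤ M * Q) (hlarge : n ^ 2 ≤ 2 * M) :
    27 * P ≤ 8 * n ^ 4 ∧
      (27 * P = 8 * n ^ 4 → 3 * M = 2 * n ^ 2 ∧ 2 * D = S + M * n ∧ M ^ 2 = n * D) := by
  have hM : 0 < M := by nlinarith [pow_pos hn 2]
  have t₁ : 0 ≤ 27 * M * n ^ 2 * (M * n ^ 2 - Q - 2 * P) := by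
    have : 0 ≤ M * n ^ 2 - Q - 2 * P := by linarith
    positivity
  have t₂ : 0 ≤ 27 * n ^ 2 * (M * Q - S ^ 2) := by
    have := sub_nonneg.2 hSQ
    positivity
  have t₃ : 0 ≤ (n * (S + M * n - 2 * D) + 2 * (n * D - M ^ 2)) *
      (S * n + M * (2 * M - n ^ 2)) := by
    have := sub_nonneg.2 hD
    have := sub_nonneg.2 hMD
    have := sub_nonneg.2 hlarge
    positivity
  have t₄ : 0 ≤ 4 * M * (3 * M - 2 * n ^ 2) ^ 2 * (3 * M + n ^ 2) := by
    have := hM.le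
    positivity
  -- `tᵢ` are the slacks of `hP`, `hSQ`, `hD` with `hMD`, and of the last step `27 · 4M²(n² - M)
  -- ≤ 16n⁶`; at equality all of them vanish.
  have key : M * (16 * n ^ 6 - 54 * P * n ^ 2) =
      27 * M * n ^ 2 * (M * n ^ 2 - Q - 2 * P) + 27 * n ^ 2 * (M * Q - S ^ 2)
        + 27 * ((n * (S + M * n - 2 * D) + 2 * (n * D - M ^ 2)) *
          (S * n + M * (2 * M - n ^ 2)))
        + 4 * M * (3 * M - 2 * n ^ 2) ^ 2 * (3 * M + n ^ 2) := by ring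
  refine ⟨?_, fun h => ?_⟩
  · have h₀ : 0 ≤ M * n ^ 2 * (16 * n ^ 4 - 54 * P) := by
      linear_combination key + t₁ + t₂ + 27 * t₃ + t₄
    linarith [nonneg_of_mul_nonneg_right h₀ (by positivity)]
  have h₀ : M * (16 * n ^ 6 - 54 * P * n ^ 2) = 0 := by
    rw [show 54 * P = 2 * (8 * n ^ 4) by linarith]
    ring
  have h3M : 3 * M = 2 * n ^ 2 := by
    have : 4 * M * (3 * M - 2 * n ^ 2) ^ 2 * (3 * M + n ^ 2) = 0 := by linarith
    have : (3 * M - 2 * n ^ 2) ^ 2 = 0 := by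
      simpa [hM.ne', (by positivity : 3 * M + n ^ 2 ≠ 0)] using this
    nlinarith
  have hpos : 0 < S * n + M * (2 * M - n ^ 2) := by
    nlinarith [mul_nonneg hS hn.le, pow_pos hn 2]
  have h₃ : n * (S + M * n - 2 * D) + 2 * (n * D - M ^ 2) = 0 := by
    have : (n * (S + M * n - 2 * D) + 2 * (n * D - M ^ 2)) *
        (S * n + M * (2 * M - n ^ 2)) = 0 := by linarith
    simpa [hpos.ne'] using this
  have hSD : n * (S + M * n - 2 * D) = 0 := by nlinarith [sub_nonneg.2 hD, sub_nonneg.2 hMD]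
  have hSD' : S + M * n - 2 * D = 0 := by simpa [hn.ne'] using hSD
  exact ⟨h3M, by linarith, by linarith⟩

theorem bound_of_degree_codegree_inequalities {n M P D S Q : ℝ} (hn : 0 ≤ n) (hD₀ : 0 ≤ D)
    (hS : 0 ≤ S) (hQ : 0 ≤ Q) (hP : 2 * P + Q ≤ M * n ^ 2) (hD : 2 * D ≤ S + M * n)
    (hMD : M ^ 2 ≤ n * D) (hSQ : S ^ 2 ≤ M * Q) :
    27 * P ≤ 8 * n ^ 4 ∧
      (27 * P = 8 * n ^ 4 → 3 * M = 2 * n ^ 2 ∧ 2 * D = S + M * n ∧ M ^ 2 = n * D) := by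
  rcases hn.eq_or_lt with rfl | hn
  · have hM : M = 0 := by nlinarith
    subst hM
    have hS0 : S = 0 := by nlinarith
    exact ⟨by linarith, fun _ => ⟨by ring, by nlinarith, by ring⟩⟩
  rcases lt_or_ge (2 * M) (n ^ 2) with hsmall | hlarge
  · have hlt : 27 * P < 8 * n ^ 4 := by nlinarith [pow_pos hn 2]
    exact ⟨hlt.le, fun h => absurd h hlt.ne⟩
  exact bound_of_degree_codegree_inequalities_of_sq_le hn hS hP hD hMD hSQ hlarge

namespace SimpleGraph

theorem isCompleteMultipartite_iff_forall_adj {V : Type*} (G : SimpleGraph V) :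
    G.IsCompleteMultipartite ↔ ∀ u v, G.Adj u v → ∀ x, G.Adj u x ∨ G.Adj v x := by
  refine ⟨fun h u v huv x => ?_, fun h => ⟨fun a b c hab hbc hac => ?_⟩⟩
  · by_contra! hx
    exact h.trans u x v hx.1 (fun hxv => hx.2 hxv.symm) huv
  · rcases h a c hac b with hab' | hcb
    · exact hab hab'
    · exact hbc hcb.symm

def completeMultipartiteGraph.congr {ι ι' : Type*} {α : ι → Type*} {β : ι' → Type*}
    (e : ι ≃ ι') (f : ∀ i, α i ≃ β (e i)) :
    completeMultipartiteGraph α ≃g completeMultipartiteGraph β where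
  toEquiv := e.sigmaCongr f
  map_rel_iff' := e.injective.ne_iff

variable {V : Type*} [Fintype V] (G : SimpleGraph V)

theorem nonempty_iso_completeMultipartiteGraph_iff {r k : ℕ} :
    Nonempty (G ≃g completeMultipartiteGraph fun _ : Fin r => Fin k) ↔
      G.IsCompleteMultipartite ∧ Fintype.card V = r * k ∧ ∀ v, G.degree v = (r - 1) * k := by
  constructor
  · rintro ⟨e⟩
    let f : G ≃g completeEquipartiteGraph r k :=
      e.trans completeEquipartiteGraph.completeMultipartiteGraph.symm
    refine ⟨(completeMultipartiteGraph.isCompleteMultipartite _).comap e.toEmbedding,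
      by simp [Fintype.card_congr f.toEquiv], fun v => ?_⟩
    rw [← f.degree_eq v, degree_completeEquipartiteGraph]
  rintro ⟨h, hcard, hdeg⟩
  rcases k.eq_zero_or_pos with rfl | hk
  · have : IsEmpty V := Fintype.card_eq_zero_iff.1 (by simpa using hcard)
    have : IsEmpty (Σ _ : Fin r, Fin 0) := ⟨fun a => a.2.elim0⟩
    exact ⟨⟨Equiv.equivOfIsEmpty _ _, fun {a} => isEmptyElim a⟩⟩
  have hpart : ∀ c : Quotient h.setoid, Fintype.card {x // h.setoid c.out x} = k := by
    intro c
    obtain ⟨r, rfl⟩ : ∃ r', r = r' + 1 := Nat.exists_eq_add_one.2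
      (Nat.pos_of_mul_pos_right (hcard ▸ Fintype.card_pos (α := V) (h := ⟨c.out⟩)))
    refine (Fintype.card_congr (Equiv.subtypeEquivRight (p := (h.setoid c.out ·))
      (q := (¬G.Adj c.out ·)) fun _ => Iff.rfl)).trans ?_
    rw [Fintype.card_subtype_compl, Fintype.card_subtype, ← neighborFinset_eq_filter,
      card_neighborFinset_eq_degree, hdeg, hcard, Nat.add_sub_cancel, add_one_mul,
      Nat.add_sub_cancel_left]
  have hparts : Fintype.card (Quotient h.setoid) = r := by
    have := Fintype.card_congr h.iso.toEquiv
    rw [Fintype.card_sigma, sum_congr rfl fun c _ => hpart c, sum_const, card_univ,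
      smul_eq_mul, hcard] at this
    exact (Nat.eq_of_mul_eq_mul_right hk this).symm
  exact ⟨h.iso.trans (completeMultipartiteGraph.congr (Fintype.equivFinOfCardEq hparts)
    fun c => Fintype.equivFinOfCardEq (hpart c))⟩

noncomputable def codegree (u v : V) : ℕ := #(G.neighborFinset u ∩ G.neighborFinset v)

theorem degree_add_degree_eq (u v : V) :
    G.degree u + G.degree v = #(G.neighborFinset u ∪ G.neighborFinset v) + G.codegree u v := by
  rw [codegree, card_union_add_card_inter, card_neighborFinset_eq_degree,
    card_neighborFinset_eq_degree]

theorem degree_add_degree_le (u v : V) :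
    G.degree u + G.degree v ≤ Fintype.card V + G.codegree u v := by
  rw [degree_add_degree_eq]
  exact Nat.add_le_add_right (card_le_univ _) _

theorem degree_add_degree_eq_iff (u v : V) :
    G.degree u + G.degree v = Fintype.card V + G.codegree u v ↔
      ∀ x, G.Adj u x ∨ G.Adj v x := by
  rw [degree_add_degree_eq, Nat.add_right_cancel_iff, card_eq_iff_eq_univ, eq_univ_iff_forall]
  simp only [mem_union, mem_neighborFinset]

theorem sum_darts_eq_sum_adj {M : Type*} [AddCommMonoid M] (f : V → V → M) :
    ∑ d : G.Dart, f d.fst d.snd = ∑ u, ∑ v, if G.Adj u v then f u v else 0 := by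
  have himage : (univ : Finset G.Dart).map ⟨Dart.toProd, Dart.toProd_injective⟩ =
      ({p : V × V | G.Adj p.1 p.2} : Finset _) := by
    ext p
    simp only [mem_map, mem_univ, true_and, Function.Embedding.coeFn_mk, mem_filter]
    exact ⟨fun ⟨d, hd⟩ => hd ▸ d.adj, fun h => ⟨⟨p, h⟩, rfl⟩⟩
  rw [← sum_product', univ_product_univ, ← sum_filter, ← himage, sum_map]
  rfl

theorem sum_darts_fst {M : Type*} [AddCommMonoid M] (g : V → M) :
    ∑ d : G.Dart, g d.fst = ∑ v, G.degree v • g v := by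
  rw [G.sum_darts_eq_sum_adj fun u _ => g u]
  refine sum_congr rfl fun u _ => ?_
  rw [← sum_filter, sum_const, ← neighborFinset_eq_filter, card_neighborFinset_eq_degree]

theorem sum_darts_snd {M : Type*} [AddCommMonoid M] (g : V → M) :
    ∑ d : G.Dart, g d.snd = ∑ v, G.degree v • g v :=
  (Equiv.sum_comp (Dart.symm_involutive.toPerm _) fun d : G.Dart => g d.fst).trans
    (G.sum_darts_fst g)

theorem sum_darts_degree_add_degree :
    ∑ d : G.Dart, (G.degree d.fst + G.degree d.snd) = 2 * ∑ v, G.degree v ^ 2 := by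
  rw [sum_add_distrib, G.sum_darts_fst (fun v => G.degree v),
    G.sum_darts_snd (fun v => G.degree v), ← two_mul]
  simp only [smul_eq_mul, sq]

theorem sum_darts_codegree_add_card :
    ∑ d : G.Dart, (G.codegree d.fst d.snd + Fintype.card V) =
      ∑ d : G.Dart, G.codegree d.fst d.snd + Fintype.card G.Dart * Fintype.card V := by
  rw [sum_add_distrib, sum_const, card_univ, smul_eq_mul]

theorem two_mul_sum_sq_degree_le :
    2 * ∑ v, G.degree v ^ 2 ≤
      ∑ d : G.Dart, G.codegree d.fst d.snd + Fintype.card G.Dart * Fintype.card V := by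
  rw [← sum_darts_degree_add_degree, ← sum_darts_codegree_add_card]
  exact sum_le_sum fun d _ => (G.degree_add_degree_le _ _).trans_eq (add_comm _ _)

theorem isCompleteMultipartite_of_two_mul_sum_sq_degree_eq
    (h : 2 * ∑ v, G.degree v ^ 2 =
      ∑ d : G.Dart, G.codegree d.fst d.snd + Fintype.card G.Dart * Fintype.card V) :
    G.IsCompleteMultipartite := by
  rw [← sum_darts_degree_add_degree, ← sum_darts_codegree_add_card] at h
  have hd := (sum_eq_sum_iff_of_le fun d _ =>
    (G.degree_add_degree_le d.fst d.snd).trans_eq (add_comm _ _)).1 h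
  refine (G.isCompleteMultipartite_iff_forall_adj).2 fun u v huv => ?_
  rw [← degree_add_degree_eq_iff, add_comm (Fintype.card V)]
  exact hd ⟨(u, v), huv⟩ (mem_univ _)

theorem sq_card_dart_le : Fintype.card G.Dart ^ 2 ≤ Fintype.card V * ∑ v, G.degree v ^ 2 := by
  simpa [dart_card_eq_sum_degrees] using
    sq_sum_le_card_mul_sum_sq (s := univ) (f := fun v => G.degree v)

theorem degree_mul_card_eq_of_sq_card_dart_eq
    (h : Fintype.card G.Dart ^ 2 = Fintype.card V * ∑ v, G.degree v ^ 2) (v : V) :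
    G.degree v * Fintype.card V = Fintype.card G.Dart := by
  set n := Fintype.card V
  set M := Fintype.card G.Dart
  have hM : (M : ℤ) = ∑ w, (G.degree w : ℤ) := by exact_mod_cast G.dart_card_eq_sum_degrees
  have hD : (M : ℤ) ^ 2 = n * ∑ w, (G.degree w : ℤ) ^ 2 := by exact_mod_cast h
  have hsum : ∑ w, ((G.degree w : ℤ) * n - M) ^ 2 = 0 := by
    have : ∑ w, ((G.degree w : ℤ) * n - M) ^ 2 =
        n ^ 2 * ∑ w, (G.degree w : ℤ) ^ 2 - 2 * n * M * ∑ w, (G.degree w : ℤ) + n * M ^ 2 := by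
      simp only [sub_sq, sum_add_distrib, sum_sub_distrib, mul_pow, ← sum_mul, ← mul_sum,
        sum_const, card_univ, nsmul_eq_mul]
      ring
    rw [this, ← hM]
    linear_combination (-(n : ℤ)) * hD
  have hv := (sum_eq_zero_iff_of_nonneg fun w _ => sq_nonneg _).1 hsum v (mem_univ v)
  have : (G.degree v : ℤ) * n = M := by linarith [pow_eq_zero_iff two_ne_zero |>.1 hv]
  exact_mod_cast this

theorem sq_sum_codegree_le :
    (∑ d : G.Dart, G.codegree d.fst d.snd) ^ 2 ≤
      Fintype.card G.Dart * ∑ d : G.Dart, G.codegree d.fst d.snd ^ 2 :=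
  sq_sum_le_card_mul_sum_sq

theorem three_dvd_card_and_nonempty_iso_of_eq
    (h₁ : 3 * Fintype.card G.Dart = 2 * Fintype.card V ^ 2)
    (h₂ : 2 * ∑ v, G.degree v ^ 2 =
      ∑ d : G.Dart, G.codegree d.fst d.snd + Fintype.card G.Dart * Fintype.card V)
    (h₃ : Fintype.card G.Dart ^ 2 = Fintype.card V * ∑ v, G.degree v ^ 2) :
    3 ∣ Fintype.card V ∧
      Nonempty (G ≃g completeMultipartiteGraph fun _ : Fin 3 => Fin (Fintype.card V / 3)) := by
  have hdvd : 3 ∣ Fintype.card V := Nat.prime_three.dvd_of_dvd_pow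
    ((Nat.Coprime.dvd_mul_left (by norm_num : Nat.Coprime 3 2)).1 ⟨_, h₁.symm⟩)
  refine ⟨hdvd, (G.nonempty_iso_completeMultipartiteGraph_iff).2
    ⟨G.isCompleteMultipartite_of_two_mul_sum_sq_degree_eq h₂, by omega, fun v => ?_⟩⟩
  have hn : 0 < Fintype.card V := Fintype.card_pos_iff.2 ⟨v⟩
  have hv : 3 * G.degree v = 2 * Fintype.card V := by
    refine Nat.eq_of_mul_eq_mul_right hn ?_
    rw [mul_assoc, G.degree_mul_card_eq_of_sq_card_dart_eq h₃ v, h₁]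
    ring
  omega

end SimpleGraph

section PIw

variable {V : Type*} [Fintype V] (G : SimpleGraph V)

open SimpleGraph

theorem ncl_add_ncl_add_card_filter_dist_eq (u v : V) :
    ncl G u v + ncl G v u + #{x | G.dist x u = G.dist x v} = Fintype.card V := by
  rw [ncl, ncl, ← card_union_of_disjoint (disjoint_filter.2 fun x _ h h' => lt_asymm h h'),
    ← filter_or]
  simpa [← ne_iff_lt_or_gt] using
    card_filter_add_card_filter_not (s := univ) fun x => G.dist x u ≠ G.dist x v

theorem inter_neighborFinset_subset_filter_dist_eq (u v : V) :
    G.neighborFinset u ∩ G.neighborFinset v ⊆ ({x | G.dist x u = G.dist x v} : Finset V) := by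
  intro x hx
  simp only [mem_inter, mem_neighborFinset] at hx
  simp [dist_eq_one_iff_adj.2 hx.1.symm, dist_eq_one_iff_adj.2 hx.2.symm]

theorem filter_dist_eq_eq_inter_neighborFinset {u v : V} (hdom : ∀ x, G.Adj u x ∨ G.Adj v x) :
    ({x | G.dist x u = G.dist x v} : Finset V) = G.neighborFinset u ∩ G.neighborFinset v := by
  refine subset_antisymm (fun x hx => ?_) (inter_neighborFinset_subset_filter_dist_eq G u v)
  simp only [mem_filter, mem_univ, true_and] at hx
  simp only [mem_inter, mem_neighborFinset]
  rcases hdom x with hux | hvx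
  · rw [dist_eq_one_iff_adj.2 hux.symm, eq_comm, dist_eq_one_iff_adj] at hx
    exact ⟨hux, hx.symm⟩
  · rw [dist_eq_one_iff_adj.2 hvx.symm, dist_eq_one_iff_adj] at hx
    exact ⟨hx.symm, hvx⟩

theorem ncl_add_ncl_add_codegree_le (u v : V) :
    ncl G u v + ncl G v u + G.codegree u v ≤ Fintype.card V :=
  ncl_add_ncl_add_card_filter_dist_eq G u v ▸
    Nat.add_le_add_left (card_le_card (inter_neighborFinset_subset_filter_dist_eq G u v)) _

theorem ncl_add_ncl_add_codegree_eq {u v : V} (hdom : ∀ x, G.Adj u x ∨ G.Adj v x) :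
    ncl G u v + ncl G v u + G.codegree u v = Fintype.card V := by
  rw [codegree, ← filter_dist_eq_eq_inter_neighborFinset G hdom,
    ncl_add_ncl_add_card_filter_dist_eq]

noncomputable def PIwTerm (u v : V) : ℕ :=
  (G.degree u + G.degree v) * (ncl G u v + ncl G v u)

theorem PIwTerm_add_sq_codegree_le (u v : V) :
    PIwTerm G u v + G.codegree u v ^ 2 ≤ Fintype.card V ^ 2 := by
  have h₁ := G.degree_add_degree_le u v
  have h₂ := ncl_add_ncl_add_codegree_le G u v
  unfold PIwTerm
  nlinarith

theorem PIw_eq_sum_darts : PIw G = (∑ d : G.Dart, (PIwTerm G d.fst d.snd : ℝ)) / 2 := by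
  rw [PIw, ← G.sum_darts_eq_sum_adj]
  simp only [PIwTerm, Nat.cast_mul]

theorem two_mul_PIw_add_sum_sq_codegree_le :
    2 * PIw G + ∑ d : G.Dart, (G.codegree d.fst d.snd : ℝ) ^ 2 ≤
      Fintype.card G.Dart * (Fintype.card V : ℝ) ^ 2 := by
  have h : ∑ d : G.Dart, (PIwTerm G d.fst d.snd + G.codegree d.fst d.snd ^ 2) ≤
      ∑ _d : G.Dart, Fintype.card V ^ 2 :=
    sum_le_sum fun d _ => PIwTerm_add_sq_codegree_le G _ _
  rw [sum_add_distrib, sum_const, card_univ, smul_eq_mul] at h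
  rw [PIw_eq_sum_darts, mul_div_cancel₀ _ two_ne_zero]
  exact_mod_cast h

theorem PIw_eq_of_iso {k : ℕ} (e : G ≃g completeMultipartiteGraph fun _ : Fin 3 => Fin k) :
    PIw G = 8 / 27 * (Fintype.card V : ℝ) ^ 4 := by
  obtain ⟨hmult, hcard, hdeg⟩ := (G.nonempty_iso_completeMultipartiteGraph_iff).1 ⟨e⟩
  have hdom := (G.isCompleteMultipartite_iff_forall_adj).1 hmult
  have hterm : ∀ d : G.Dart, PIwTerm G d.fst d.snd = 8 * k ^ 2 := by
    intro d
    have h₁ := (G.degree_add_degree_eq_iff _ _).2 (hdom _ _ d.adj)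
    have h₂ := ncl_add_ncl_add_codegree_eq G (hdom _ _ d.adj)
    rw [hdeg, hdeg, hcard] at h₁
    rw [PIwTerm, hdeg, hdeg, show ncl G d.fst d.snd + ncl G d.snd d.fst = 2 * k by omega]
    ring
  have hM : Fintype.card G.Dart = 6 * k ^ 2 := by
    simp only [dart_card_eq_sum_degrees, hdeg, sum_const, card_univ, hcard, smul_eq_mul]
    ring
  rw [PIw_eq_sum_darts]
  simp only [hterm, sum_const, card_univ, hM, hcard, nsmul_eq_mul]
  push_cast
  ring

end PIw

theorem PIw_upper_bound_global_general {V : Type*} [Fintype V] (G : SimpleGraph V) :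
    PIw G ≤ 8 / 27 * (Fintype.card V : ℝ) ^ 4 ∧
    (PIw G = 8 / 27 * (Fintype.card V : ℝ) ^ 4 ↔
      3 ∣ Fintype.card V ∧
      Nonempty (G ≃g SimpleGraph.completeMultipartiteGraph
        (fun _ : Fin 3 => Fin (Fintype.card V / 3)))) := by
  obtain ⟨hle, heq⟩ := bound_of_degree_codegree_inequalities (n := Fintype.card V) (P := PIw G)
    (D := ∑ v, (G.degree v : ℝ) ^ 2) (S := ∑ d : G.Dart, (G.codegree d.fst d.snd : ℝ))
    (by positivity) (by positivity) (by positivity) (by positivity)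
    (two_mul_PIw_add_sum_sq_codegree_le G) (by exact_mod_cast G.two_mul_sum_sq_degree_le)
    (by exact_mod_cast G.sq_card_dart_le) (by exact_mod_cast G.sq_sum_codegree_le)
  refine ⟨by linarith, fun h => ?_, fun ⟨_, ⟨e⟩⟩ => PIw_eq_of_iso G e⟩
  obtain ⟨h₁, h₂, h₃⟩ := heq (by linarith)
  exact G.three_dvd_card_and_nonempty_iso_of_eq (by exact_mod_cast h₁) (by exact_mod_cast h₂)
    (by exact_mod_cast h₃)

theorem PIw_upper_bound_global {V : Type*} [Fintype V] (G : SimpleGraph V)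
    (hconn : G.Connected) :
    PIw G ≤ 8 / 27 * (Fintype.card V : ℝ) ^ 4 ∧
    (PIw G = 8 / 27 * (Fintype.card V : ℝ) ^ 4 ↔
      3 ∣ Fintype.card V ∧
      Nonempty (G ≃g SimpleGraph.completeMultipartiteGraph
        (fun _ : Fin 3 => Fin (Fintype.card V / 3)))) :=
  PIw_upper_bound_global_general G
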